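/- For the retroreflector measure ν⋆ (supported on y = x with density cos x · δ(x-y)) and 0 < λ ≤ 1, the moment of the resistance force equals R_I[ν⋆, λ] = -(3/8)∫_{-π/2}^{π/2} ((λ sin x + sin ζ)³/sin ζ) · 2 sin x · cos x dx = -3λ/2, where ζ = arcsin(√(1 - λ² cos² x)). -/

import Mathlib

/-!
The measure ν⋆ is the image of `cos x dx` on `[-π/2, π/2]` under the diagonal `x ↦ (x, x)`,
so `R_I[ν⋆, λ]` is a one-dimensional integral. Since `sin ζ = σ := √(1 - λ² cos² x)`, the function
`F = 2λ sin³x σ + 2λ² sin⁴x + (1 - λ²) sin²x` is a primitive of its integrand wherever `σ ≠ 0`,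
that is, on `(-π/2, π/2)` except possibly at `x = 0`. As `|λ sin x| ≤ σ ≤ 1`, the integrand is
bounded, so the fundamental theorem of calculus with a countable exceptional set applies and
gives `F(π/2) - F(-π/2) = 4λ`.
-/

open Real MeasureTheory

noncomputable def gammaM : Measure ℝ :=
  (volume.restrict (Set.Icc (-(π/2)) (π/2))).withDensity
    (fun φ => ENNReal.ofReal (Real.cos φ))

noncomputable def nuStar : Measure (ℝ × ℝ) :=
  gammaM.map (fun x => (x, x))

noncomputable def zeta (x lam : ℝ) : ℝ :=
  Real.arcsin (Real.sqrt (1 - lam^2 * Real.cos x ^ 2))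

/-- integrand of the moment of the resistance force, `0 < λ ≤ 1`. -/
noncomputable def cI (lam : ℝ) (p : ℝ × ℝ) : ℝ :=
  -((3/8) * ((lam * Real.sin p.1 + Real.sin (zeta p.1 lam))^3 / Real.sin (zeta p.1 lam)) *
    (Real.sin p.1 + Real.sin p.2))

theorem sin_zeta (x lam : ℝ) : sin (zeta x lam) = √(1 - lam ^ 2 * cos x ^ 2) := by
  rw [zeta, sin_arcsin (by linarith [sqrt_nonneg (1 - lam ^ 2 * cos x ^ 2)])]
  exact sqrt_le_one.mpr (by nlinarith [sq_nonneg (lam * cos x)])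

theorem measurableEmbedding_diag {α : Type*} [MeasurableSpace α] [MeasurableEq α] :
    MeasurableEmbedding (fun x : α => (x, x)) :=
  .of_measurable_inverse (by fun_prop) (Set.range_diag ▸ measurableSet_diagonal) measurable_fst
    fun _ => rfl

theorem integral_nuStar (f : ℝ × ℝ → ℝ) :
    ∫ p, f p ∂nuStar = ∫ x in Set.Icc (-(π / 2)) (π / 2), cos x * f (x, x) := by
  rw [nuStar, measurableEmbedding_diag.integral_map, gammaM,
    integral_withDensity_eq_integral_toReal_smul (by fun_prop) (by simp)]
  refine setIntegral_congr_fun measurableSet_Icc fun x hx => ?_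
  rw [ENNReal.toReal_ofReal (cos_nonneg_of_mem_Icc hx), smul_eq_mul]

section Moment

noncomputable def momentIntegrand (lam x : ℝ) : ℝ :=
  (lam * sin x + √(1 - lam ^ 2 * cos x ^ 2)) ^ 3 / √(1 - lam ^ 2 * cos x ^ 2) *
    (2 * sin x) * cos x

noncomputable def momentPrimitive (lam x : ℝ) : ℝ :=
  2 * lam * sin x ^ 3 * √(1 - lam ^ 2 * cos x ^ 2) + 2 * lam ^ 2 * sin x ^ 4 +
    (1 - lam ^ 2) * sin x ^ 2

variable {lam : ℝ}

theorem hasDerivAt_momentPrimitive {x : ℝ} (hx : 0 < 1 - lam ^ 2 * cos x ^ 2) :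
    HasDerivAt (momentPrimitive lam) (momentIntegrand lam x) x := by
  have hu : HasDerivAt (fun y => 1 - lam ^ 2 * cos y ^ 2) (2 * lam ^ 2 * cos x * sin x) x := by
    refine ((((hasDerivAt_cos x).pow 2).const_mul (lam ^ 2)).const_sub 1).congr_deriv ?_
    ring
  have hs := hasDerivAt_sin x
  refine ((((hs.pow 3).const_mul (2 * lam)).mul (hu.sqrt hx.ne')).add
    ((hs.pow 4).const_mul (2 * lam ^ 2)) |>.add ((hs.pow 2).const_mul (1 - lam ^ 2))).congr_deriv ?_
  have hσsq : √(1 - lam ^ 2 * cos x ^ 2) ^ 2 = 1 - lam ^ 2 + lam ^ 2 * sin x ^ 2 := by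
    rw [sq_sqrt hx.le, cos_sq']; ring
  have hσ0 : √(1 - lam ^ 2 * cos x ^ 2) ≠ 0 := (sqrt_pos.mpr hx).ne'
  simp only [momentIntegrand, Pi.pow_apply]
  generalize √(1 - lam ^ 2 * cos x ^ 2) = σ at hσsq hσ0 ⊢
  simp only [Nat.cast_ofNat, Nat.add_one_sub_one]
  field_simp
  linear_combination (-sin x * cos x * σ) * hσsq

theorem continuous_momentPrimitive (lam : ℝ) : Continuous (momentPrimitive lam) := by
  unfold momentPrimitive; fun_prop

theorem abs_momentIntegrand_le (hlam : lam ^ 2 ≤ 1) (x : ℝ) : |momentIntegrand lam x| ≤ 16 := by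
  set σ := √(1 - lam ^ 2 * cos x ^ 2) with hσ
  have hσ1 : σ ≤ 1 := sqrt_le_one.mpr (by nlinarith [sq_nonneg lam, sq_nonneg (cos x)])
  have hsσ : |lam * sin x| ≤ σ := abs_le_sqrt (by nlinarith [sin_sq_add_cos_sq x, sq_nonneg (cos x)])
  have hquot : |(lam * sin x + σ) ^ 3 / σ| ≤ 8 := by
    have hσ0 : 0 ≤ σ := sqrt_nonneg _
    clear_value σ
    rcases hσ0.eq_or_lt with h | h
    · rw [← h, div_zero, abs_zero]; norm_num
    · rw [abs_div, abs_of_pos h, div_le_iff₀ h, abs_pow]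
      have : |lam * sin x + σ| ≤ 2 * σ := by
        rw [abs_le]; constructor <;> linarith [abs_le.mp hsσ]
      calc |lam * sin x + σ| ^ 3 ≤ (2 * σ) ^ 3 := by gcongr
        _ ≤ 8 * σ := by nlinarith [mul_le_one₀ hσ1 h.le hσ1]
  calc |momentIntegrand lam x| = |(lam * sin x + σ) ^ 3 / σ| * (2 * |sin x|) * |cos x| := by
        simp only [momentIntegrand, ← hσ, abs_mul, abs_two]
    _ ≤ 8 * (2 * 1) * 1 := by gcongr; exacts [abs_sin_le_one x, abs_cos_le_one x]
    _ = 16 := by norm_num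

theorem intervalIntegrable_momentIntegrand (hlam : lam ^ 2 ≤ 1) (a b : ℝ) :
    IntervalIntegrable (momentIntegrand lam) volume a b :=
  (intervalIntegrable_const (c := (16 : ℝ))).mono_fun'
    (by unfold momentIntegrand; fun_prop) (.of_forall (abs_momentIntegrand_le hlam))

theorem integral_momentIntegrand (hlam : lam ^ 2 ≤ 1) :
    ∫ x in -(π / 2)..π / 2, momentIntegrand lam x = 4 * lam := by
  have hpos : ∀ x ∈ Set.Ioo (-(π / 2)) (π / 2) \ {0}, 0 < 1 - lam ^ 2 * cos x ^ 2 := by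
    rintro x ⟨⟨hlo, hhi⟩, hx0⟩
    have : sin x ≠ 0 := by
      rwa [Ne, sin_eq_zero_iff_of_lt_of_lt (by linarith [pi_pos]) (by linarith [pi_pos])]
    nlinarith [sin_sq_add_cos_sq x, sq_pos_of_ne_zero this, sq_nonneg (cos x)]
  rw [integral_eq_of_hasDerivAt_off_countable_of_le _ _ (by linarith [pi_pos])
    (Set.countable_singleton 0) (continuous_momentPrimitive lam).continuousOn
    (fun x hx => hasDerivAt_momentPrimitive (hpos x hx))
    (intervalIntegrable_momentIntegrand hlam _ _)]
  simp only [momentPrimitive, sin_neg, cos_neg, sin_pi_div_two, cos_pi_div_two, ne_eq,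
    OfNat.ofNat_ne_zero, not_false_eq_true, zero_pow, mul_zero, sub_zero, sqrt_one]
  ring

end Moment

theorem stmt_9 (lam : ℝ) (h0 : 0 < lam) (h1 : lam ≤ 1) :
    ((∫ p, cI lam p ∂nuStar) =
      -((3/8) * ∫ x in Set.Icc (-(π/2)) (π/2),
        ((lam * Real.sin x + Real.sin (zeta x lam))^3 / Real.sin (zeta x lam)) *
          (2 * Real.sin x) * Real.cos x)) ∧
    (∫ p, cI lam p ∂nuStar) = -(3 * lam / 2) := by
  have hlam : lam ^ 2 ≤ 1 := by nlinarith
  have hreduce : (∫ p, cI lam p ∂nuStar) =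
      -((3/8) * ∫ x in Set.Icc (-(π/2)) (π/2),
        ((lam * Real.sin x + Real.sin (zeta x lam))^3 / Real.sin (zeta x lam)) *
          (2 * Real.sin x) * Real.cos x) := by
    rw [integral_nuStar, ← integral_const_mul, ← integral_neg]
    refine setIntegral_congr_fun measurableSet_Icc fun x _ => ?_
    simp only [cI]
    ring
  have hmoment : ∫ x in Set.Icc (-(π/2)) (π/2),
      ((lam * Real.sin x + Real.sin (zeta x lam))^3 / Real.sin (zeta x lam)) *
        (2 * Real.sin x) * Real.cos x = 4 * lam := by
    simp only [sin_zeta]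
    rw [integral_Icc_eq_integral_Ioc, ← intervalIntegral.integral_of_le (by linarith [pi_pos])]
    exact integral_momentIntegrand hlam
  refine ⟨hreduce, ?_⟩
  rw [hreduce, hmoment]
  ring
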